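/- Gaussian expectation identity (parallel component, phase retrieval). Let Z₁, Z₂ be independent standard normal random variables, let α > 0 and β ≥ 0, and set φ = arctan(β/α). Then E[ sign(αZ₁ + βZ₂) · sign(Z₁) · Z₁² ] = 1 − (1/π)·(2φ − sin(2φ)). -/

import Mathlib

open MeasureTheory ProbabilityTheory

/-- `sign(v) = 1` if `v ≥ 0` and `−1` otherwise. -/
noncomputable def sgn (v : ℝ) : ℝ := if 0 ≤ v then 1 else -1

namespace PRaux

open Real Set Filter

noncomputable def ρ (x : ℝ) : ℝ := (√(2 * π))⁻¹ * rexp (-x ^ 2 / 2)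

lemma ρ_eq : gaussianPDFReal 0 1 = ρ := by
  ext x; simp [gaussianPDFReal, ρ]

lemma ρ_nonneg (x : ℝ) : 0 ≤ ρ x := by
  unfold ρ; positivity

lemma continuous_ρ : Continuous ρ := by
  unfold ρ; fun_prop

lemma ρ_even (x : ℝ) : ρ (-x) = ρ x := by simp [ρ]

lemma integral_ρ : ∫ x, ρ x = 1 := by
  rw [← ρ_eq]; exact integral_gaussianPDFReal_eq_one 0 one_ne_zero

lemma measurable_sgn : Measurable sgn := by
  unfold sgn
  exact Measurable.ite (measurableSet_le measurable_const measurable_id) measurable_const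
    measurable_const

lemma abs_sgn (v : ℝ) : |sgn v| = 1 := by
  unfold sgn; split <;> simp

lemma gauss_withDensity :
    gaussianReal 0 1 = (volume : Measure ℝ).withDensity
      (fun x => ((fun x => (ρ x).toNNReal) x : ENNReal)) := by
  rw [gaussianReal_of_var_ne_zero 0 one_ne_zero]
  congr 1
  ext x
  simp [gaussianPDF_def, ENNReal.ofReal, ρ_eq]

lemma measurable_ρ_toNNReal : Measurable (fun x => (ρ x).toNNReal) :=
  continuous_ρ.measurable.real_toNNReal

lemma integral_gauss (g : ℝ → ℝ) :
    ∫ x, g x ∂(gaussianReal 0 1) = ∫ x, ρ x * g x := by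
  rw [gauss_withDensity, integral_withDensity_eq_integral_smul measurable_ρ_toNNReal g]
  congr 1
  ext x
  simp [NNReal.smul_def, Real.coe_toNNReal _ (ρ_nonneg x)]

lemma integrable_gauss_iff (g : ℝ → ℝ) :
    Integrable g (gaussianReal 0 1) ↔ Integrable (fun x => ρ x * g x) := by
  rw [gauss_withDensity, integrable_withDensity_iff_integrable_smul measurable_ρ_toNNReal]
  constructor <;> intro h <;> [skip; skip] <;>
  · apply h.congr
    filter_upwards with x
    simp [NNReal.smul_def, Real.coe_toNNReal _ (ρ_nonneg x)]

noncomputable def Φ (u : ℝ) : ℝ := ∫ t in Iio u, ρ t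

lemma integrable_ρ : Integrable ρ := by
  rw [← ρ_eq]; exact integrable_gaussianPDFReal 0 1

lemma Φ_add_Φ_neg (u : ℝ) : Φ u + Φ (-u) = 1 := by
  have h1 : Φ (-u) = ∫ t in Ioi u, ρ t := by
    rw [Φ, ← integral_Iic_eq_integral_Iio, ← integral_comp_neg_Ioi]
    simp_rw [ρ_even]
  rw [Φ, h1, ← integral_Ici_eq_integral_Ioi,
    intervalIntegral.integral_Iio_add_Ici integrable_ρ.integrableOn integrable_ρ.integrableOn, integral_ρ]

lemma Φ_zero : Φ 0 = 1 / 2 := by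
  have := Φ_add_Φ_neg 0
  simp at this; linarith

lemma Φ_nonneg (u : ℝ) : 0 ≤ Φ u :=
  setIntegral_nonneg measurableSet_Iio fun x _ => ρ_nonneg x

lemma Φ_le_one (u : ℝ) : Φ u ≤ 1 := by
  have := Φ_add_Φ_neg u
  have := Φ_nonneg (-u)
  linarith

lemma hasDerivAt_Φ (u : ℝ) : HasDerivAt Φ (ρ u) u := by
  have key : Φ = fun v => (∫ t in Iic (0:ℝ), ρ t) + ∫ t in (0:ℝ)..v, ρ t := by
    funext v
    rw [Φ, ← integral_Iic_eq_integral_Iio,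
      ← intervalIntegral.integral_Iic_sub_Iic integrable_ρ.integrableOn
        integrable_ρ.integrableOn]
    ring
  rw [key]
  exact ((intervalIntegral.integral_hasDerivAt_right
    (continuous_ρ.intervalIntegrable _ _)
    (continuous_ρ.stronglyMeasurableAtFilter _ _)
    continuous_ρ.continuousAt).const_add _)

lemma measure_Iio (r : ℝ) : ((gaussianReal 0 1) (Iio r)).toReal = Φ r := by
  rw [gaussianReal_apply_eq_integral 0 one_ne_zero, ρ_eq,
    ENNReal.toReal_ofReal (setIntegral_nonneg measurableSet_Iio fun x _ => ρ_nonneg x)]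
  rfl

lemma ρ_abs (x : ℝ) : ρ |x| = ρ x := by
  rcases abs_choice x with h | h <;> rw [h]
  exact ρ_even x

lemma integrable_pow_mul_exp (n : ℕ) :
    Integrable (fun x : ℝ => x ^ n * rexp (-x ^ 2 / 2)) := by
  have h := integrable_rpow_mul_exp_neg_mul_sq (by norm_num : (0:ℝ) < 1/2)
    (s := n) (lt_of_lt_of_le neg_one_lt_zero (Nat.cast_nonneg n))
  apply h.congr
  filter_upwards with x
  rw [Real.rpow_natCast]
  ring_nf

lemma tendsto_mul_exp (n : ℕ) (b : ℝ) (hb : 0 < b) :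
    Filter.Tendsto (fun x : ℝ => x ^ n * rexp (-b * x ^ 2)) atTop (nhds 0) := by
  have hexp : Filter.Tendsto (fun x : ℝ => rexp (-(1/2) * x)) atTop (nhds 0) :=
    Real.tendsto_exp_atBot.comp (Filter.tendsto_id.const_mul_atTop_of_neg
      (by norm_num : (-(1/2):ℝ) < 0))
  have h := (rpow_mul_exp_neg_mul_sq_isLittleO_exp_neg hb (n : ℝ)).tendsto_zero_of_tendsto hexp
  apply h.congr'
  filter_upwards with x
  rw [Real.rpow_natCast]

lemma integral_exp_Ioi : ∫ x in Ioi (0:ℝ), rexp (-x ^ 2 / 2) = √(2 * π) / 2 := by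
  have h1 : ∫ x : ℝ, rexp (-(1/2) * x ^ 2) = √(π / (1/2)) := integral_gaussian (1/2)
  have h2 : (fun x : ℝ => rexp (-(1/2) * x ^ 2)) = fun x : ℝ => rexp (-|x| ^ 2 / 2) := by
    funext x; rw [sq_abs]; ring_nf
  rw [h2] at h1
  rw [integral_comp_abs (f := fun x : ℝ => rexp (-x ^ 2 / 2))] at h1
  have : √(π / (1/2)) = √(2 * π) := by norm_num [mul_comm]
  rw [this] at h1
  linarith

lemma integral_sq_exp_Ioi : ∫ x in Ioi (0:ℝ), x ^ 2 * rexp (-x ^ 2 / 2) = √(2 * π) / 2 := by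
  have hd : ∀ x ∈ Ioi (0:ℝ), HasDerivAt (fun x : ℝ => -(x * rexp (-x ^ 2 / 2)))
      (x ^ 2 * rexp (-x ^ 2 / 2) - rexp (-x ^ 2 / 2)) x := by
    intro x _
    have h1 : HasDerivAt (fun x : ℝ => -x ^ 2 / 2) (-x) x := by
      have := ((hasDerivAt_pow 2 x).neg.div_const 2)
      refine this.congr_deriv ?_
      norm_num
      ring
    have := ((hasDerivAt_id x).mul h1.exp).neg
    refine this.congr_deriv ?_
    simp only [id]
    ring
  have hcont : ContinuousWithinAt (fun x : ℝ => -(x * rexp (-x ^ 2 / 2))) (Ici 0) 0 := by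
    apply Continuous.continuousWithinAt; fun_prop
  have htend : Filter.Tendsto (fun x : ℝ => -(x * rexp (-x ^ 2 / 2))) atTop (nhds 0) := by
    have := (tendsto_mul_exp 1 (1/2) (by norm_num)).neg
    simp only [neg_zero] at this
    apply this.congr
    intro x
    congr 1
    rw [pow_one]
    ring_nf
  have hint : IntegrableOn (fun x : ℝ => x ^ 2 * rexp (-x ^ 2 / 2) - rexp (-x ^ 2 / 2))
      (Ioi 0) := by
    apply Integrable.integrableOn
    have h0 := integrable_pow_mul_exp 0
    simp only [pow_zero, one_mul] at h0
    exact (integrable_pow_mul_exp 2).sub h0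
  have key := integral_Ioi_of_hasDerivAt_of_tendsto hcont hd hint htend
  simp only [mul_zero, zero_mul, neg_zero, sub_zero] at key
  have h0 := (integrable_pow_mul_exp 0)
  simp only [pow_zero, one_mul] at h0
  rw [integral_sub ((integrable_pow_mul_exp 2).integrableOn) h0.integrableOn,
    integral_exp_Ioi] at key
  linarith [key]

lemma integral_cube_exp {b : ℝ} (hb : 0 < b) :
    ∫ x in Ioi (0:ℝ), x ^ 3 * rexp (-b * x ^ 2) = 1 / (2 * b ^ 2) := by
  have hb' : b ≠ 0 := hb.ne'
  set g : ℝ → ℝ := fun x => -((x ^ 2 / (2 * b) + 1 / (2 * b ^ 2)) * rexp (-b * x ^ 2)) with hg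
  have hd : ∀ x ∈ Ioi (0:ℝ), HasDerivAt g (x ^ 3 * rexp (-b * x ^ 2)) x := by
    intro x _
    have h1 : HasDerivAt (fun x : ℝ => -b * x ^ 2) (-b * (2 * x)) x := by
      have := (hasDerivAt_pow 2 x).const_mul (-b)
      refine this.congr_deriv ?_
      norm_num
    have h2 : HasDerivAt (fun x : ℝ => x ^ 2 / (2 * b) + 1 / (2 * b ^ 2)) (x / b) x := by
      have := ((hasDerivAt_pow 2 x).div_const (2 * b)).add_const (1 / (2 * b ^ 2))
      refine this.congr_deriv ?_
      field_simp
      norm_num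
    have := (h2.mul h1.exp).neg
    refine this.congr_deriv ?_
    field_simp
    ring
  have hcont : ContinuousWithinAt g (Ici 0) 0 := by
    apply Continuous.continuousWithinAt; fun_prop
  have htend : Filter.Tendsto g atTop (nhds 0) := by
    rw [hg]
    have h2 : Filter.Tendsto (fun x : ℝ => x ^ 2 / (2 * b) * rexp (-b * x ^ 2) +
        1 / (2 * b ^ 2) * rexp (-b * x ^ 2)) atTop (nhds (0 + 0)) := by
      apply Filter.Tendsto.add
      · have := (tendsto_mul_exp 2 b hb).div_const (2 * b)
        simp only [zero_div] at this
        apply this.congr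
        intro x; ring
      · have := tendsto_exp_neg_atTop_nhds_zero.comp
          (Filter.tendsto_id.const_mul_atTop hb |>.comp (tendsto_pow_atTop two_ne_zero))
        have h3 : Filter.Tendsto (fun x : ℝ => rexp (-b * x ^ 2)) atTop (nhds 0) := by
          apply this.congr
          intro x
          simp [Function.comp]
        have := h3.const_mul (1 / (2 * b ^ 2))
        simpa using this
    simp only [add_zero] at h2
    have := h2.neg
    simp only [neg_zero] at this
    apply this.congr
    intro x; ring
  have hint : IntegrableOn (fun x : ℝ => x ^ 3 * rexp (-b * x ^ 2)) (Ioi 0) := by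
    have h := integrable_rpow_mul_exp_neg_mul_sq hb (s := ((3:ℕ):ℝ)) (by norm_num)
    apply h.integrableOn.congr_fun ?_ measurableSet_Ioi
    intro x _
    have := Real.rpow_natCast x 3
    simp only [Nat.cast_ofNat] at this
    simp [this]
  have key := integral_Ioi_of_hasDerivAt_of_tendsto hcont hd hint htend
  rw [key, hg]
  norm_num

lemma integral_sq_ρ_Ioi : ∫ x in Ioi (0:ℝ), x ^ 2 * ρ x = 1 / 2 := by
  have h : ∀ x : ℝ, x ^ 2 * ρ x = (√(2 * π))⁻¹ * (x ^ 2 * rexp (-x ^ 2 / 2)) := by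
    intro x; rw [ρ]; ring
  simp_rw [h]
  rw [integral_const_mul, integral_sq_exp_Ioi]
  have hs : √(2 * π) ≠ 0 := by positivity
  field_simp

lemma integrable_sq_gauss : Integrable (fun x : ℝ => x ^ 2) (gaussianReal 0 1) := by
  rw [integrable_gauss_iff]
  have h := (integrable_pow_mul_exp 2).const_mul (√(2 * π))⁻¹
  apply h.congr
  filter_upwards with x
  rw [ρ]; ring

lemma integral_sq_gauss : ∫ x, x ^ 2 ∂(gaussianReal 0 1) = 1 := by
  rw [integral_gauss]
  have h : (fun x : ℝ => ρ x * x ^ 2) = fun x : ℝ => ρ |x| * |x| ^ 2 := by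
    funext x; rw [ρ_abs, sq_abs]
  rw [h, integral_comp_abs (f := fun x : ℝ => ρ x * x ^ 2)]
  have h2 : ∫ x in Ioi (0:ℝ), ρ x * x ^ 2 = 1 / 2 := by
    rw [← integral_sq_ρ_Ioi]
    congr 1; funext x; ring
  rw [h2]; norm_num

lemma continuous_Φ : Continuous Φ :=
  continuous_iff_continuousAt.2 fun u => (hasDerivAt_Φ u).continuousAt

lemma ρ_le (u : ℝ) : ρ u ≤ (√(2 * π))⁻¹ := by
  rw [ρ]
  have h1 : rexp (-u ^ 2 / 2) ≤ 1 := by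
    rw [Real.exp_le_one_iff]
    nlinarith [sq_nonneg u]
  have h2 : (0:ℝ) ≤ (√(2 * π))⁻¹ := by positivity
  nlinarith

lemma integrable_sq_ρ : Integrable (fun x : ℝ => x ^ 2 * ρ x) := by
  have h := (integrable_pow_mul_exp 2).const_mul (√(2 * π))⁻¹
  apply h.congr
  filter_upwards with x
  rw [ρ]; ring

noncomputable def K (c : ℝ) : ℝ := ∫ x in Ioi (0:ℝ), x ^ 2 * ρ x * Φ (-(c * x))

lemma K_zero : K 0 = 1 / 4 := by
  unfold K
  simp only [zero_mul, neg_zero, Φ_zero]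
  rw [integral_mul_const, integral_sq_ρ_Ioi]
  norm_num

lemma hasDerivAt_K (c : ℝ) : HasDerivAt K (-(π * (1 + c ^ 2) ^ 2)⁻¹) c := by
  have hF_cont : ∀ c' : ℝ, Continuous (fun x : ℝ => x ^ 2 * ρ x * Φ (-(c' * x))) := by
    intro c'
    exact ((continuous_pow 2).mul continuous_ρ).mul
      (continuous_Φ.comp (continuous_const.mul continuous_id).neg)
  have hF'_cont : Continuous (fun x : ℝ => -(x ^ 3 * ρ x * ρ (c * x))) := by
    exact (((continuous_pow 3).mul continuous_ρ).mul
      (continuous_ρ.comp (continuous_const.mul continuous_id))).neg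
  have key := hasDerivAt_integral_of_dominated_loc_of_deriv_le
    (μ := (volume : Measure ℝ).restrict (Ioi 0))
    (F := fun c' x => x ^ 2 * ρ x * Φ (-(c' * x)))
    (F' := fun c' x => -(x ^ 3 * ρ x * ρ (c' * x)))
    (bound := fun x => x ^ 3 * ρ x * (√(2 * π))⁻¹)
    (x₀ := c) (Metric.ball_mem_nhds c one_pos)
    (Filter.Eventually.of_forall fun c' =>
      ((hF_cont c').aestronglyMeasurable).restrict)
    ?_ ?_ ?_ ?_ ?_
  · rcases key with ⟨_, hK⟩
    have hval : (∫ x in Ioi (0:ℝ), -(x ^ 3 * ρ x * ρ (c * x)))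
        = -(π * (1 + c ^ 2) ^ 2)⁻¹ := by
      have hb : (0:ℝ) < (1 + c ^ 2) / 2 := by positivity
      have hrw : ∀ x : ℝ, x ^ 3 * ρ x * ρ (c * x)
          = (2 * π)⁻¹ * (x ^ 3 * rexp (-((1 + c ^ 2) / 2) * x ^ 2)) := by
        intro x
        have h3 : (√(2 * π))⁻¹ * (√(2 * π))⁻¹ = (2 * π)⁻¹ := by
          rw [← mul_inv, Real.mul_self_sqrt (by positivity)]
        have h4 : rexp (-x ^ 2 / 2) * rexp (-(c * x) ^ 2 / 2)
            = rexp (-((1 + c ^ 2) / 2) * x ^ 2) := by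
          rw [← Real.exp_add]; congr 1; ring
        calc x ^ 3 * ρ x * ρ (c * x)
            = (√(2 * π))⁻¹ * (√(2 * π))⁻¹
              * (x ^ 3 * (rexp (-x ^ 2 / 2) * rexp (-(c * x) ^ 2 / 2))) := by rw [ρ, ρ]; ring
          _ = (2 * π)⁻¹ * (x ^ 3 * rexp (-((1 + c ^ 2) / 2) * x ^ 2)) := by rw [h3, h4]
      rw [integral_neg]
      simp_rw [hrw]
      rw [integral_const_mul, integral_cube_exp hb]
      have hπ : π ≠ 0 := pi_ne_zero
      have h1c : (1 + c ^ 2) ≠ 0 := by positivity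
      rw [neg_inj]
      field_simp
    rw [hval] at hK
    exact hK
  · -- integrability of F c
    apply Integrable.mono' integrable_sq_ρ.restrict
      ((hF_cont c).aestronglyMeasurable).restrict
    filter_upwards with x
    rw [Real.norm_eq_abs, abs_mul]
    have h1 : |x ^ 2 * ρ x| = x ^ 2 * ρ x :=
      abs_of_nonneg (mul_nonneg (sq_nonneg x) (ρ_nonneg x))
    rw [h1]
    have h2 : |Φ (-(c * x))| ≤ 1 :=
      abs_le.2 ⟨by linarith [Φ_nonneg (-(c * x))], Φ_le_one _⟩
    exact mul_le_of_le_one_right (mul_nonneg (sq_nonneg x) (ρ_nonneg x)) h2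
  · exact (hF'_cont.aestronglyMeasurable).restrict
  · -- bound
    filter_upwards [ae_restrict_mem measurableSet_Ioi] with x hx c' _
    have hx0 : (0:ℝ) < x := hx
    rw [Real.norm_eq_abs, abs_neg, abs_mul, abs_mul]
    have h1 : |x ^ 3| = x ^ 3 := abs_of_nonneg (pow_nonneg hx0.le 3)
    have h2 : |ρ x| = ρ x := abs_of_nonneg (ρ_nonneg x)
    have h3 : |ρ (c' * x)| = ρ (c' * x) := abs_of_nonneg (ρ_nonneg _)
    rw [h1, h2, h3]
    have := ρ_le (c' * x)
    have hxρ : (0:ℝ) ≤ x ^ 3 * ρ x := mul_nonneg (pow_nonneg hx0.le 3) (ρ_nonneg x)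
    exact mul_le_mul_of_nonneg_left this hxρ
  · -- bound integrable
    have h := (integrable_pow_mul_exp 3).const_mul ((√(2 * π))⁻¹ * (√(2 * π))⁻¹)
    apply Integrable.integrableOn
    apply h.congr
    filter_upwards with x
    rw [ρ]; ring
  · -- differentiability
    filter_upwards with x c' _
    have h1 : HasDerivAt (fun c' : ℝ => -(c' * x)) (-x) c' := by
      exact (hasDerivAt_mul_const x (𝕜 := ℝ)).neg
    have h2 := ((hasDerivAt_Φ (-(c' * x))).comp c' h1).const_mul (x ^ 2 * ρ x)
    refine h2.congr_deriv ?_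
    rw [ρ_even]
    ring

noncomputable def L (c : ℝ) : ℝ := 1 / 4 - (arctan c + c / (1 + c ^ 2)) / (2 * π)

lemma hasDerivAt_L (c : ℝ) : HasDerivAt L (-(π * (1 + c ^ 2) ^ 2)⁻¹) c := by
  have h1c : (1 + c ^ 2) ≠ 0 := by positivity
  have h1 : HasDerivAt (fun c : ℝ => 1 + c ^ 2) (2 * c) c := by
    simpa using ((hasDerivAt_pow 2 c).const_add 1)
  have h2 : HasDerivAt (fun c : ℝ => c / (1 + c ^ 2))
      ((1 * (1 + c ^ 2) - c * (2 * c)) / (1 + c ^ 2) ^ 2) c :=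
    (hasDerivAt_id c).div h1 h1c
  have h3 := ((Real.hasDerivAt_arctan c).add h2).div_const (2 * π)
  have h4 := (hasDerivAt_const c (1/4 : ℝ)).sub h3
  have hπ : π ≠ 0 := pi_ne_zero
  refine h4.congr_deriv ?_
  field_simp
  ring

lemma K_eq_L (c : ℝ) : K c = L c := by
  have hd : ∀ x : ℝ, HasDerivAt (fun c => K c - L c) 0 x := by
    intro x
    exact ((hasDerivAt_K x).sub (hasDerivAt_L x)).congr_deriv (sub_self _)
  have hconst : K c - L c = K 0 - L 0 :=
    is_const_of_deriv_eq_zero (fun x => (hd x).differentiableAt)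
      (fun x => (hd x).deriv) c 0
  have hL0 : L 0 = 1 / 4 := by simp [L]
  rw [K_zero, hL0] at hconst
  linarith [hconst]

lemma inner_integral (α β : ℝ) (hβ : 0 < β) (x : ℝ) :
    ∫ y, sgn (α * x + β * y) ∂(gaussianReal 0 1) = 1 - 2 * Φ (-(α / β * x)) := by
  have hkey : β * (-(α / β * x)) = -(α * x) := by field_simp
  have hset : ∀ y : ℝ, sgn (α * x + β * y)
      = 1 - 2 * Set.indicator (Iio (-(α / β * x))) (fun _ => (1:ℝ)) y := by
    intro y
    by_cases h : y < -(α / β * x)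
    · have h2 : β * y < -(α * x) := by
        have := mul_lt_mul_of_pos_left h hβ
        rwa [hkey] at this
      have h3 : ¬ (0 ≤ α * x + β * y) := by push_neg; linarith
      rw [sgn, if_neg h3, Set.indicator_of_mem (mem_Iio.2 h)]
      norm_num
    · have h2 : -(α * x) ≤ β * y := by
        have := mul_le_mul_of_nonneg_left (not_lt.1 h) hβ.le
        rwa [hkey] at this
      have h3 : 0 ≤ α * x + β * y := by linarith
      rw [sgn, if_pos h3, Set.indicator_of_notMem (by simpa using h)]
      norm_num
  simp_rw [hset]
  have hind : Integrable (Set.indicator (Iio (-(α / β * x))) (fun _ => (1:ℝ)))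
      (gaussianReal 0 1) :=
    (integrable_const 1).indicator measurableSet_Iio
  rw [integral_sub (integrable_const 1) (hind.const_mul 2), integral_const_mul]
  have h1 : ∫ (_ : ℝ), (1:ℝ) ∂(gaussianReal 0 1) = 1 := by simp
  have h2 : ∫ y, Set.indicator (Iio (-(α / β * x))) (fun _ => (1:ℝ)) y ∂(gaussianReal 0 1)
      = Φ (-(α / β * x)) := by
    rw [← measure_Iio]
    exact integral_indicator_one measurableSet_Iio
  rw [h1, h2]

lemma fubini_step (α β : ℝ) :
    (∫ z : ℝ × ℝ, sgn (α * z.1 + β * z.2) * sgn z.1 * z.1 ^ 2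
        ∂((gaussianReal 0 1).prod (gaussianReal 0 1)))
    = ∫ x, (∫ y, sgn (α * x + β * y) ∂(gaussianReal 0 1)) * sgn x * x ^ 2
        ∂(gaussianReal 0 1) := by
  have hmeas : AEStronglyMeasurable
      (fun z : ℝ × ℝ => sgn (α * z.1 + β * z.2) * sgn z.1 * z.1 ^ 2)
      ((gaussianReal 0 1).prod (gaussianReal 0 1)) := by
    apply Measurable.aestronglyMeasurable
    exact ((measurable_sgn.comp ((measurable_fst.const_mul α).add
      (measurable_snd.const_mul β))).mul (measurable_sgn.comp measurable_fst)).mul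
      (measurable_fst.pow_const 2)
  have hnorm : ∀ z : ℝ × ℝ, ‖sgn (α * z.1 + β * z.2) * sgn z.1 * z.1 ^ 2‖ = z.1 ^ 2 := by
    intro z
    rw [Real.norm_eq_abs, abs_mul, abs_mul, abs_sgn, abs_sgn, abs_of_nonneg (sq_nonneg z.1)]
    ring
  have hint : Integrable (fun z : ℝ × ℝ => sgn (α * z.1 + β * z.2) * sgn z.1 * z.1 ^ 2)
      ((gaussianReal 0 1).prod (gaussianReal 0 1)) := by
    rw [integrable_prod_iff hmeas]
    constructor
    · filter_upwards with x
      have hm : AEStronglyMeasurable (fun y : ℝ => sgn (α * x + β * y) * sgn x * x ^ 2)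
          (gaussianReal 0 1) := by
        apply Measurable.aestronglyMeasurable
        exact ((measurable_sgn.comp ((measurable_id.const_mul β).const_add (α * x))).mul
          measurable_const).mul measurable_const
      apply (integrable_const (x ^ 2)).mono' hm
      filter_upwards with y
      exact le_of_eq (hnorm (x, y))
    · apply integrable_sq_gauss.congr
      filter_upwards with x
      have h5 : ∀ y : ℝ, ‖sgn (α * x + β * y) * sgn x * x ^ 2‖ = x ^ 2 :=
        fun y => hnorm (x, y)
      simp_rw [h5, integral_const, probReal_univ, one_smul]
  rw [integral_prod _ hint]
  congr 1
  funext x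
  rw [← integral_mul_const, ← integral_mul_const]

end PRaux

/-- Gaussian expectation identity (parallel component, phase retrieval):
`E[ sign(αZ₁ + βZ₂) · sign(Z₁) · Z₁² ] = 1 − (1/π)(2φ − sin 2φ)` with `φ = arctan(β/α)`. -/
theorem gaussian_identity_parallel_phase_retrieval (α β : ℝ) (hα : 0 < α) (hβ : 0 ≤ β) :
    (∫ z : ℝ × ℝ, sgn (α * z.1 + β * z.2) * sgn z.1 * z.1 ^ 2
        ∂((gaussianReal 0 1).prod (gaussianReal 0 1))) =
      1 - 1 / Real.pi *
        (2 * Real.arctan (β / α) - Real.sin (2 * Real.arctan (β / α))) := by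
  rcases eq_or_lt_of_le hβ with hβ0 | hβpos
  · -- case β = 0
    subst hβ0
    rw [PRaux.fubini_step]
    have hin : ∀ x : ℝ, (∫ y, sgn (α * x + 0 * y) ∂(gaussianReal 0 1)) = sgn x := by
      intro x
      have h4 : ∀ y : ℝ, sgn (α * x + 0 * y) = sgn x := by
        intro y
        rw [zero_mul, add_zero]
        unfold sgn
        rcases le_or_gt 0 x with h | h
        · rw [if_pos (mul_nonneg hα.le h), if_pos h]
        · rw [if_neg (not_le.2 (mul_neg_of_pos_of_neg hα h)), if_neg (not_le.2 h)]
      simp_rw [h4]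
      simp
    simp_rw [hin]
    have h5 : ∀ x : ℝ, sgn x * sgn x * x ^ 2 = x ^ 2 := by
      intro x; unfold sgn; split <;> ring
    simp_rw [h5, PRaux.integral_sq_gauss]
    norm_num
  · -- case β > 0
    have hc : 0 < α / β := div_pos hα hβpos
    have h1c : (0:ℝ) < 1 + (α / β) ^ 2 := by positivity
    have hπ : Real.pi ≠ 0 := Real.pi_ne_zero
    rw [PRaux.fubini_step]
    simp_rw [PRaux.inner_integral α β hβpos]
    have hptw : ∀ x : ℝ, (1 - 2 * PRaux.Φ (-(α / β * x))) * sgn x * x ^ 2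
        = x ^ 2 - 2 * (x ^ 2 * PRaux.Φ (-(α / β * |x|))) := by
      intro x
      rcases le_or_gt 0 x with h | h
      · rw [abs_of_nonneg h]
        unfold sgn
        rw [if_pos h]; ring
      · rw [abs_of_neg h]
        unfold sgn
        rw [if_neg (not_le.2 h)]
        have h2 := PRaux.Φ_add_Φ_neg (α / β * x)
        have h3 : -(α / β * -x) = α / β * x := by ring
        rw [h3]
        linear_combination (2 * x ^ 2) * h2
    simp_rw [hptw]
    have hint2 : Integrable (fun x : ℝ => 2 * (x ^ 2 * PRaux.Φ (-(α / β * |x|))))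
        (gaussianReal 0 1) := by
      apply (PRaux.integrable_sq_gauss.const_mul 2).mono'
      · apply Measurable.aestronglyMeasurable
        exact measurable_const.mul ((measurable_id.pow_const 2).mul
          (PRaux.continuous_Φ.measurable.comp ((measurable_id.abs.const_mul (α / β)).neg)))
      · filter_upwards with x
        rw [Real.norm_eq_abs, abs_mul, abs_mul]
        have h1 : |(2:ℝ)| = 2 := by norm_num
        have h2 : |x ^ 2| = x ^ 2 := abs_of_nonneg (sq_nonneg x)
        have h3 : |PRaux.Φ (-(α / β * |x|))| ≤ 1 :=
          abs_le.2 ⟨by linarith [PRaux.Φ_nonneg (-(α / β * |x|))], PRaux.Φ_le_one _⟩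
        rw [h1, h2]
        nlinarith [sq_nonneg x, abs_nonneg (PRaux.Φ (-(α / β * |x|)))]
    rw [integral_sub PRaux.integrable_sq_gauss hint2, PRaux.integral_sq_gauss,
      integral_const_mul, PRaux.integral_gauss]
    have habs : (fun x : ℝ => PRaux.ρ x * (x ^ 2 * PRaux.Φ (-(α / β * |x|))))
        = fun x : ℝ => PRaux.ρ |x| * (|x| ^ 2 * PRaux.Φ (-(α / β * |x|))) := by
      funext x; rw [PRaux.ρ_abs, sq_abs]
    rw [habs,
      integral_comp_abs (f := fun t : ℝ => PRaux.ρ t * (t ^ 2 * PRaux.Φ (-(α / β * t))))]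
    have hK : ∫ t in Set.Ioi (0:ℝ), PRaux.ρ t * (t ^ 2 * PRaux.Φ (-(α / β * t)))
        = PRaux.K (α / β) := by
      unfold PRaux.K
      congr 1; funext t; ring
    rw [hK, PRaux.K_eq_L]
    unfold PRaux.L
    have ht : β / α = (α / β)⁻¹ := (inv_div α β).symm
    have harct : Real.arctan (β / α) = Real.pi / 2 - Real.arctan (α / β) := by
      rw [ht]; exact Real.arctan_inv_of_pos hc
    rw [harct]
    have hsin : Real.sin (2 * (Real.pi / 2 - Real.arctan (α / β)))
        = 2 * (α / β) / (1 + (α / β) ^ 2) := by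
      have h6 : 2 * (Real.pi / 2 - Real.arctan (α / β))
          = Real.pi - 2 * Real.arctan (α / β) := by ring
      rw [h6, Real.sin_pi_sub, Real.sin_two_mul, Real.sin_arctan, Real.cos_arctan]
      have h8 : √(1 + (α / β) ^ 2) * √(1 + (α / β) ^ 2) = 1 + (α / β) ^ 2 :=
        Real.mul_self_sqrt h1c.le
      rw [show (2:ℝ) * (α / β / √(1 + (α / β) ^ 2)) * (1 / √(1 + (α / β) ^ 2))
          = 2 * (α / β) / (√(1 + (α / β) ^ 2) * √(1 + (α / β) ^ 2)) from by ring, h8]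
    rw [hsin]
    have h7 : (1:ℝ) + (α / β) ^ 2 ≠ 0 := h1c.ne'
    field_simp
    ring
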